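/- arXiv:2210.04763 — 5 statements merged into one kernel-verified Lean document; each statement's English description precedes it below -/
import Mathlib

section
/- Let t₀ ∈ ℝ, let w : ℝ → ℝ be differentiable on [t₀, ∞), and let α : ℝ → ℝ be an extended class K function. If w(t₀) ≥ 0 and w'(t) + α(w(t)) ≥ 0 for all t ≥ t₀, then w(t) ≥ 0 for all t ≥ t₀. -/
/-- Scalar comparison principle: if `w` is differentiable on `[t₀, ∞)`, `α` is an
extended class K function (locally Lipschitz, strictly increasing, `α 0 = 0`),
`w t₀ ≥ 0` and `w' t + α (w t) ≥ 0` for all `t ≥ t₀`, then `w t ≥ 0` for all `t ≥ t₀`. -/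
theorem scalar_comparison_invariance
    (t₀ : ℝ) (w : ℝ → ℝ)
    (hw : DifferentiableOn ℝ w (Set.Ici t₀))
    (α : ℝ → ℝ) (hα_lip : LocallyLipschitz α) (hα_mono : StrictMono α) (hα0 : α 0 = 0)
    (h0 : 0 ≤ w t₀)
    (hineq : ∀ t, t₀ ≤ t → 0 ≤ derivWithin w (Set.Ici t₀) t + α (w t)) :
    ∀ t, t₀ ≤ t → 0 ≤ w t := by
  intro t₁ ht₁
  by_contra hneg
  push_neg at hneg
  have hcont : ContinuousOn w (Set.Ici t₀) := hw.continuousOn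
  -- Set of times in [t₀, t₁] where w is nonnegative
  set S : Set ℝ := {u | u ∈ Set.Icc t₀ t₁ ∧ 0 ≤ w u} with hS
  have hS_ne : S.Nonempty := ⟨t₀, ⟨le_refl _, ht₁⟩, h0⟩
  have hS_bdd : BddAbove S := ⟨t₁, fun u hu => hu.1.2⟩
  have hS_closed : IsClosed S := by
    have : S = Set.Icc t₀ t₁ ∩ w ⁻¹' Set.Ici 0 := by
      ext u; simp [hS, Set.mem_preimage, and_comm]
    rw [this]
    exact (hcont.mono (Set.Icc_subset_Ici_self)).preimage_isClosed_of_isClosed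
      isClosed_Icc isClosed_Ici
  set s := sSup S with hs
  have hsS : s ∈ S := hS_closed.csSup_mem hS_ne hS_bdd
  have hst₀ : t₀ ≤ s := hsS.1.1
  have hst₁ : s ≤ t₁ := hsS.1.2
  have hws : 0 ≤ w s := hsS.2
  have hslt : s < t₁ := lt_of_le_of_ne hst₁ fun h => absurd hws (by rw [h]; exact not_le.mpr hneg)
  -- on (s, t₁], w is negative
  have hneg' : ∀ u, s < u → u ≤ t₁ → w u < 0 := by
    intro u hsu hu
    by_contra h
    push_neg at h
    exact absurd (le_csSup hS_bdd (⟨⟨hst₀.trans hsu.le, hu⟩, h⟩ : u ∈ S)) (not_le.mpr hsu)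
  -- w is strictly monotone on [s, t₁]
  have hmono : StrictMonoOn w (Set.Icc s t₁) := by
    apply strictMonoOn_of_deriv_pos (convex_Icc s t₁)
      (hcont.mono (Set.Icc_subset_Ici_self.trans (Set.Ici_subset_Ici.mpr hst₀)))
    intro x hx
    rw [interior_Icc] at hx
    have hx0 : t₀ < x := lt_of_le_of_lt hst₀ hx.1
    have hmem : Set.Ici t₀ ∈ nhds x := Ici_mem_nhds hx0
    have hd : derivWithin w (Set.Ici t₀) x = deriv w x := derivWithin_of_mem_nhds hmem
    have hwx : w x < 0 := hneg' x hx.1 hx.2.le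
    have hαx : α (w x) < 0 := hα0 ▸ hα_mono hwx
    have := hineq x hx0.le
    rw [hd] at this
    linarith
  have := hmono (Set.left_mem_Icc.mpr hslt.le) (Set.right_mem_Icc.mpr hslt.le) hslt
  linarith
end

section
/- Let n, p, q ∈ ℕ, let θᴾ be an n×p real matrix, θᴺ an n×q real matrix, and let zᴾ : ℝⁿ → ℝᵖ and zᴺ : ℝⁿ → ℝ^q be continuous. Let x : ℝ → ℝⁿ be continuously differentiable with x'(t) = θᴾ · zᴾ(x(t)) + θᴺ · zᴺ(x(t)) for all t ≥ t₀. Let h : ℝⁿ → ℝ be continuously differentiable and let α₁ be an extended class K function. If h(x(t₀)) ≥ 0 and for every t ≥ t₀ one has ⟨∇h(x(t)), θᴾ · zᴾ(x(t)) + θᴺ · zᴺ(x(t))⟩ + α₁(h(x(t))) ≥ 0, then h(x(t)) ≥ 0 for all t ≥ t₀ (the neural ODE is forward invariant with respect to the output specification h ≥ 0). -/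
/-!
Along the trajectory, `y = h ∘ x` satisfies `y' ≥ -α₁(y) > 0` wherever `y < 0`. If `y` became
negative at some `t₁`, then after the last time `s ≤ t₁` with `y s ≥ 0` the function would be
strictly increasing on `[s, t₁]`, forcing `y t₁ > y s ≥ 0`.
-/

open Set

theorem exists_last_nonneg_of_neg {y : ℝ → ℝ} {a b : ℝ} (hab : a ≤ b)
    (hy : ContinuousOn y (Icc a b)) (ha : 0 ≤ y a) (hb : y b < 0) :
    ∃ s ∈ Ico a b, 0 ≤ y s ∧ ∀ t ∈ Ioc s b, y t < 0 := by
  have hclosed : IsClosed (Icc a b ∩ y ⁻¹' Ici 0) :=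
    hy.preimage_isClosed_of_isClosed isClosed_Icc isClosed_Ici
  obtain ⟨s, ⟨hs_mem, hys⟩, hs_max⟩ :=
    (isCompact_Icc.of_isClosed_subset hclosed inter_subset_left).exists_isGreatest
      ⟨a, ⟨left_mem_Icc.2 hab, ha⟩⟩
  have hsb : s < b := hs_mem.2.lt_of_ne fun hsb => (hsb ▸ hb).not_ge hys
  refine ⟨s, ⟨hs_mem.1, hsb⟩, hys, fun t ⟨hst, htb⟩ => ?_⟩
  by_contra! hyt
  exact (hs_max ⟨⟨hs_mem.1.trans hst.le, htb⟩, hyt⟩).not_gt hst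

theorem nonneg_of_hasDerivAt_pos_of_neg {y y' : ℝ → ℝ} {t₀ : ℝ}
    (hy : ∀ t, t₀ ≤ t → HasDerivAt y (y' t) t)
    (hpos : ∀ t, t₀ ≤ t → y t < 0 → 0 < y' t) (h0 : 0 ≤ y t₀) :
    ∀ t, t₀ ≤ t → 0 ≤ y t := by
  intro t₁ ht₁
  by_contra! hneg
  have hcont : ContinuousOn y (Ici t₀) := fun t ht => (hy t ht).continuousAt.continuousWithinAt
  obtain ⟨s, ⟨hs₀, hs₁⟩, hys, hneg_after⟩ :=
    exists_last_nonneg_of_neg ht₁ (hcont.mono Icc_subset_Ici_self) h0 hneg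
  have hmono : StrictMonoOn y (Icc s t₁) := by
    refine strictMonoOn_of_hasDerivWithinAt_pos (f' := y') (convex_Icc s t₁)
      (hcont.mono fun t ht => hs₀.trans ht.1) (fun t ht => ?_) (fun t ht => ?_)
    all_goals rw [interior_Icc] at ht
    · exact (hy t (hs₀.trans ht.1.le)).hasDerivWithinAt
    · exact hpos t (hs₀.trans ht.1.le) (hneg_after t ⟨ht.1, ht.2.le⟩)
  linarith [hmono (left_mem_Icc.2 hs₁.le) (right_mem_Icc.2 hs₁.le) hs₁]

theorem nonneg_of_hasDerivAt_add_nonneg {y y' α : ℝ → ℝ} {t₀ : ℝ} (hα : ∀ v < 0, α v < 0)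
    (hy : ∀ t, t₀ ≤ t → HasDerivAt y (y' t) t)
    (hineq : ∀ t, t₀ ≤ t → 0 ≤ y' t + α (y t)) (h0 : 0 ≤ y t₀) :
    ∀ t, t₀ ≤ t → 0 ≤ y t :=
  nonneg_of_hasDerivAt_pos_of_neg hy
    (fun t ht hyt => by linarith [hineq t ht, hα _ hyt]) h0

theorem invariance_propagation_linear_layer_general
    (n p q : ℕ) (t₀ : ℝ)
    (θP : Matrix (Fin n) (Fin p) ℝ) (θN : Matrix (Fin n) (Fin q) ℝ)
    (zP : (Fin n → ℝ) → Fin p → ℝ) (zN : (Fin n → ℝ) → Fin q → ℝ)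
    (x : ℝ → Fin n → ℝ)
    (hode : ∀ t, t₀ ≤ t →
      HasDerivAt x (θP.mulVec (zP (x t)) + θN.mulVec (zN (x t))) t)
    (h : (Fin n → ℝ) → ℝ) (hh : ContDiff ℝ 1 h)
    (α₁ : ℝ → ℝ) (hα_mono : StrictMono α₁)
    (hα0 : α₁ 0 = 0)
    (h0 : 0 ≤ h (x t₀))
    (hineq : ∀ t, t₀ ≤ t →
      0 ≤ fderiv ℝ h (x t) (θP.mulVec (zP (x t)) + θN.mulVec (zN (x t)))
            + α₁ (h (x t))) :
    ∀ t, t₀ ≤ t → 0 ≤ h (x t) :=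
  nonneg_of_hasDerivAt_add_nonneg (y := fun t => h (x t))
    (fun _ hv => hα0 ▸ hα_mono hv)
    (fun t ht => (hh.differentiable one_ne_zero (x t)).hasFDerivAt.comp_hasDerivAt t (hode t ht))
    hineq h0

/-- Invariance propagation to linear layers (Theorem 2): along a trajectory of the
neural ODE `ẋ = θᴾ zᴾ(x) + θᴺ zᴺ(x)`, if the constraint
`⟨∇h(x), θᴾ zᴾ(x) + θᴺ zᴺ(x)⟩ + α₁(h(x)) ≥ 0` holds for all `t ≥ t₀` and
`h(x(t₀)) ≥ 0`, then `h(x(t)) ≥ 0` for all `t ≥ t₀`. -/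
theorem invariance_propagation_linear_layer
    (n p q : ℕ) (t₀ : ℝ)
    (θP : Matrix (Fin n) (Fin p) ℝ) (θN : Matrix (Fin n) (Fin q) ℝ)
    (zP : (Fin n → ℝ) → Fin p → ℝ) (zN : (Fin n → ℝ) → Fin q → ℝ)
    (hzP : Continuous zP) (hzN : Continuous zN)
    (x : ℝ → Fin n → ℝ) (hx : ContDiff ℝ 1 x)
    (hode : ∀ t, t₀ ≤ t →
      HasDerivAt x (θP.mulVec (zP (x t)) + θN.mulVec (zN (x t))) t)
    (h : (Fin n → ℝ) → ℝ) (hh : ContDiff ℝ 1 h)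
    (α₁ : ℝ → ℝ) (hα_lip : LocallyLipschitz α₁) (hα_mono : StrictMono α₁)
    (hα0 : α₁ 0 = 0)
    (h0 : 0 ≤ h (x t₀))
    (hineq : ∀ t, t₀ ≤ t →
      0 ≤ fderiv ℝ h (x t) (θP.mulVec (zP (x t)) + θN.mulVec (zN (x t)))
            + α₁ (h (x t))) :
    ∀ t, t₀ ≤ t → 0 ≤ h (x t) :=
  invariance_propagation_linear_layer_general n p q t₀ θP θN zP zN x hode h hh α₁ hα_mono hα0 h0
    hineq
end

section
/- Let x : ℝ → ℝⁿ and θ : ℝ → ℝ^d be continuously differentiable, let f : ℝⁿ × ℝ^d → ℝⁿ be continuously differentiable, and suppose x'(t) = f(x(t), θ(t)) for all t ≥ t₀. Let h : ℝⁿ → ℝ be twice continuously differentiable, let α₁ be a continuously differentiable extended class K function, and let α₂ be an extended class K function. Define ψ₁(t) = Dh(x(t))[f(x(t), θ(t))] + α₁(h(x(t))), where Dh denotes the derivative of h. If h(x(t₀)) ≥ 0, ψ₁(t₀) ≥ 0, and ψ₁'(t) + α₂(ψ₁(t)) ≥ 0 for all t ≥ t₀, then h(x(t)) ≥ 0 for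 all t ≥ t₀. -/
/-!
Both barrier conditions have the form `g' + α ∘ g ≥ 0` with `α` of class K, so wherever `g < 0`
we get `g' ≥ -α (g) > 0`: a function that is increasing wherever it is negative cannot leave
`[0, ∞)`. Applied to `ψ₁` with `α₂` this gives `ψ₁ ≥ 0`, and since `(h ∘ x)' = ψ₁ - α₁ (h ∘ x)`
along the trajectory, applying it again to `h ∘ x` with `α₁` gives `h ∘ x ≥ 0`.
-/

open Set

theorem nonneg_of_deriv_pos_of_neg {g : ℝ → ℝ} {a : ℝ} (hg : ContinuousOn g (Ici a))
    (hga : 0 ≤ g a) (hderiv : ∀ t, a < t → g t < 0 → 0 < deriv g t) :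
    ∀ t, a ≤ t → 0 ≤ g t := by
  intro t hat
  by_contra! hgt
  have hgIcc : ContinuousOn g (Icc a t) := hg.mono Icc_subset_Ici_self
  set S := Icc a t ∩ g ⁻¹' Ici 0
  have hS : IsCompact S :=
    isCompact_Icc.of_isClosed_subset
      (hgIcc.preimage_isClosed_of_isClosed isClosed_Icc isClosed_Ici) inter_subset_left
  -- `τ` is the last nonnegative point before `t`; on `(τ, t)` `g` is negative, hence increasing.
  obtain ⟨τ, ⟨⟨haτ, hτt⟩, hgτ⟩, hτmax⟩ := hS.exists_isGreatest ⟨a, ⟨left_mem_Icc.2 hat, hga⟩⟩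
  have hτt : τ < t := lt_of_le_of_ne hτt (by rintro rfl; exact hgt.not_ge hgτ)
  have hmono : StrictMonoOn g (Icc τ t) := by
    refine strictMonoOn_of_deriv_pos (convex_Icc τ t)
      (hgIcc.mono (Icc_subset_Icc_left haτ)) fun s hs => ?_
    rw [interior_Icc] at hs
    refine hderiv s (haτ.trans_lt hs.1) (not_le.1 fun hgs => hs.1.not_ge ?_)
    exact hτmax ⟨⟨haτ.trans hs.1.le, hs.2.le⟩, hgs⟩
  have := hmono (left_mem_Icc.2 hτt.le) (right_mem_Icc.2 hτt.le) hτt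
  linarith [show 0 ≤ g τ from hgτ]

theorem nonneg_of_deriv_add_classK_nonneg {α : ℝ → ℝ} (hα : StrictMono α) (hα0 : α 0 = 0)
    {g : ℝ → ℝ} {a : ℝ} (hg : ContinuousOn g (Ici a)) (hga : 0 ≤ g a)
    (hbarrier : ∀ t, a < t → 0 ≤ deriv g t + α (g t)) :
    ∀ t, a ≤ t → 0 ≤ g t := by
  refine nonneg_of_deriv_pos_of_neg hg hga fun t hat hgt => ?_
  have : α (g t) < 0 := hα0 ▸ hα hgt
  linarith [hbarrier t hat]

theorem invariance_propagation_nonlinear_layer_general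
    (n d : ℕ) (t₀ : ℝ)
    (x : ℝ → Fin n → ℝ)
    (θ : ℝ → Fin d → ℝ) (hθ : ContDiff ℝ 1 θ)
    (f : (Fin n → ℝ) × (Fin d → ℝ) → Fin n → ℝ) (hf : ContDiff ℝ 1 f)
    (hode : ∀ t, t₀ ≤ t → HasDerivAt x (f (x t, θ t)) t)
    (h : (Fin n → ℝ) → ℝ) (hh : ContDiff ℝ 2 h)
    (α₁ : ℝ → ℝ) (hα₁_smooth : ContDiff ℝ 1 α₁)
    (hα₁_mono : StrictMono α₁) (hα₁0 : α₁ 0 = 0)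
    (α₂ : ℝ → ℝ) (hα₂_mono : StrictMono α₂)
    (hα₂0 : α₂ 0 = 0)
    (ψ₁ : ℝ → ℝ)
    (hψ₁ : ∀ t, ψ₁ t = fderiv ℝ h (x t) (f (x t, θ t)) + α₁ (h (x t)))
    (h0 : 0 ≤ h (x t₀)) (hψ₁0 : 0 ≤ ψ₁ t₀)
    (hineq : ∀ t, t₀ ≤ t → 0 ≤ deriv ψ₁ t + α₂ (ψ₁ t)) :
    ∀ t, t₀ ≤ t → 0 ≤ h (x t) := by
  have hx_cont : ContinuousOn x (Ici t₀) := fun t ht => (hode t ht).continuousAt.continuousWithinAt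
  have hhx : ContinuousOn (fun t => h (x t)) (Ici t₀) := hh.continuous.comp_continuousOn hx_cont
  have hψ₁_cont : ContinuousOn ψ₁ (Ici t₀) := by
    rw [funext hψ₁]
    exact (((hh.continuous_fderiv two_ne_zero).comp_continuousOn hx_cont).clm_apply
      (hf.continuous.comp_continuousOn (hx_cont.prodMk hθ.continuous.continuousOn))).add
      (hα₁_smooth.continuous.comp_continuousOn hhx)
  have hψ₁_nonneg := nonneg_of_deriv_add_classK_nonneg hα₂_mono hα₂0 hψ₁_cont hψ₁0
    fun t ht => hineq t ht.le
  refine nonneg_of_deriv_add_classK_nonneg hα₁_mono hα₁0 hhx h0 fun t ht => ?_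
  have hderiv : deriv (fun s => h (x s)) t = fderiv ℝ h (x t) (f (x t, θ t)) :=
    ((hh.differentiable two_ne_zero _).hasFDerivAt.comp_hasDerivAt t (hode t ht.le)).deriv
  rw [hderiv, ← hψ₁ t]
  exact hψ₁_nonneg t ht.le

/-- Invariance propagation to nonlinear layers (Theorem 3): along a trajectory of
`ẋ = f(x, θ)` with time-varying parameters `θ`, with first-order barrier
`ψ₁(t) = Dh(x t)[f(x t, θ t)] + α₁(h (x t))`, if `h(x t₀) ≥ 0`, `ψ₁ t₀ ≥ 0`, and
`ψ₁' t + α₂(ψ₁ t) ≥ 0` for all `t ≥ t₀`, then `h(x t) ≥ 0` for all `t ≥ t₀`. -/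
theorem invariance_propagation_nonlinear_layer
    (n d : ℕ) (t₀ : ℝ)
    (x : ℝ → Fin n → ℝ) (hx : ContDiff ℝ 1 x)
    (θ : ℝ → Fin d → ℝ) (hθ : ContDiff ℝ 1 θ)
    (f : (Fin n → ℝ) × (Fin d → ℝ) → Fin n → ℝ) (hf : ContDiff ℝ 1 f)
    (hode : ∀ t, t₀ ≤ t → HasDerivAt x (f (x t, θ t)) t)
    (h : (Fin n → ℝ) → ℝ) (hh : ContDiff ℝ 2 h)
    (α₁ : ℝ → ℝ) (hα₁_smooth : ContDiff ℝ 1 α₁) (hα₁_lip : LocallyLipschitz α₁)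
    (hα₁_mono : StrictMono α₁) (hα₁0 : α₁ 0 = 0)
    (α₂ : ℝ → ℝ) (hα₂_lip : LocallyLipschitz α₂) (hα₂_mono : StrictMono α₂)
    (hα₂0 : α₂ 0 = 0)
    (ψ₁ : ℝ → ℝ)
    (hψ₁ : ∀ t, ψ₁ t = fderiv ℝ h (x t) (f (x t, θ t)) + α₁ (h (x t)))
    (h0 : 0 ≤ h (x t₀)) (hψ₁0 : 0 ≤ ψ₁ t₀)
    (hineq : ∀ t, t₀ ≤ t → 0 ≤ deriv ψ₁ t + α₂ (ψ₁ t)) :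
    ∀ t, t₀ ≤ t → 0 ≤ h (x t) :=
  invariance_propagation_nonlinear_layer_general n d t₀ x θ hθ f hf hode h hh α₁ hα₁_smooth hα₁_mono
    hα₁0 α₂ hα₂_mono hα₂0 ψ₁ hψ₁ h0 hψ₁0 hineq
end

section
/- Let m ∈ ℕ with m ≥ 1, let t₀ ∈ ℝ, and let w : ℝ → ℝ be m-times continuously differentiable on [t₀, ∞). Let α₁, …, α_m be extended class K functions such that the recursively defined functions ψ₀ = w and ψ_i(t) = ψ_{i−1}'(t) + α_i(ψ_{i−1}(t)) for i = 1, …, m are each differentiable on [t₀, ∞) (for i < m). If ψ_i(t₀) ≥ 0 for every i ∈ {0, 1, …, m−1} and ψ_m(t) ≥ 0 for all t ≥ t₀, then ψ_i(t) ≥ 0 for all i ∈ {0, 1, …, m−1} and all t ≥ t₀; in particular w(t) ≥ 0 for all t ≥ t₀. -/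
lemma barrier_step (t₀ : ℝ) (f : ℝ → ℝ) (hf : DifferentiableOn ℝ f (Set.Ici t₀))
    (a : ℝ → ℝ) (ha : StrictMono a) (ha0 : a 0 = 0)
    (h0 : 0 ≤ f t₀)
    (hge : ∀ t, t₀ ≤ t → 0 ≤ derivWithin f (Set.Ici t₀) t + a (f t)) :
    ∀ t, t₀ ≤ t → 0 ≤ f t := by
  intro t₁ ht₁
  by_contra hneg
  push_neg at hneg
  have hcont : ContinuousOn f (Set.Icc t₀ t₁) :=
    hf.continuousOn.mono Set.Icc_subset_Ici_self
  set S := Set.Icc t₀ t₁ ∩ f ⁻¹' Set.Ici 0 with hS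
  have hSclosed : IsClosed S :=
    hcont.preimage_isClosed_of_isClosed isClosed_Icc isClosed_Ici
  have hSne : S.Nonempty := ⟨t₀, ⟨le_refl _, ht₁⟩, h0⟩
  have hSbdd : BddAbove S := ⟨t₁, fun x hx => hx.1.2⟩
  set s := sSup S with hs
  have hsS : s ∈ S := hSclosed.csSup_mem hSne hSbdd
  have hst₀ : t₀ ≤ s := hsS.1.1
  have hst₁ : s ≤ t₁ := hsS.1.2
  have hfs : 0 ≤ f s := hsS.2
  have hslt : s < t₁ := lt_of_le_of_ne hst₁ (by intro h; rw [h] at hfs; linarith)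
  have hnegIoo : ∀ t ∈ Set.Ioo s t₁, f t < 0 := by
    intro t ht
    by_contra h
    push_neg at h
    have : t ∈ S := ⟨⟨hst₀.trans ht.1.le, ht.2.le⟩, h⟩
    exact absurd (le_csSup hSbdd this) (not_le.2 ht.1)
  have hmono : StrictMonoOn f (Set.Icc s t₁) := by
    apply strictMonoOn_of_deriv_pos (convex_Icc s t₁)
      (hcont.mono (Set.Icc_subset_Icc hst₀ le_rfl))
    intro t ht
    rw [interior_Icc] at ht
    have ht₀ : t₀ < t := lt_of_le_of_lt hst₀ ht.1
    have hmem : Set.Ici t₀ ∈ nhds t := Ici_mem_nhds ht₀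
    have hda : DifferentiableAt ℝ f t :=
      (hf t ht₀.le).differentiableAt hmem
    have hdw : derivWithin f (Set.Ici t₀) t = deriv f t := derivWithin_of_mem_nhds hmem
    have h1 := hge t ht₀.le
    rw [hdw] at h1
    have h2 : a (f t) < 0 := ha0 ▸ ha (hnegIoo t ht)
    linarith
  have := hmono ⟨le_rfl, hst₁⟩ ⟨hslt.le, le_rfl⟩ hslt
  linarith


/-- Trajectory-wise high-order barrier function theorem (Theorem 1): with
`ψ₀ = w` and `ψᵢ = ψᵢ₋₁' + αᵢ(ψᵢ₋₁)`, if `ψᵢ(t₀) ≥ 0` for `i < m` and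
`ψ_m(t) ≥ 0` for all `t ≥ t₀`, then `ψᵢ(t) ≥ 0` for all `i < m` and `t ≥ t₀`;
in particular `w(t) ≥ 0` for all `t ≥ t₀`. -/
theorem high_order_barrier_invariance
    (m : ℕ) (hm : 1 ≤ m) (t₀ : ℝ)
    (w : ℝ → ℝ) (hw : ContDiffOn ℝ m w (Set.Ici t₀))
    (α : ℕ → ℝ → ℝ)
    (hα : ∀ i, 1 ≤ i → i ≤ m →
      LocallyLipschitz (α i) ∧ StrictMono (α i) ∧ α i 0 = 0)
    (ψ : ℕ → ℝ → ℝ)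
    (hψ0 : ψ 0 = w)
    (hψ : ∀ i, 1 ≤ i → i ≤ m → ∀ t, t₀ ≤ t →
      ψ i t = derivWithin (ψ (i - 1)) (Set.Ici t₀) t + α i (ψ (i - 1) t))
    (hdiff : ∀ i, i < m → DifferentiableOn ℝ (ψ i) (Set.Ici t₀))
    (hinit : ∀ i, i < m → 0 ≤ ψ i t₀)
    (hfin : ∀ t, t₀ ≤ t → 0 ≤ ψ m t) :
    (∀ i, i < m → ∀ t, t₀ ≤ t → 0 ≤ ψ i t) ∧ (∀ t, t₀ ≤ t → 0 ≤ w t) := by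
  have key : ∀ j, j ≤ m → ∀ t, t₀ ≤ t → 0 ≤ ψ (m - j) t := by
    intro j
    induction j with
    | zero => intro _ t ht; simpa using hfin t ht
    | succ j ih =>
      intro hj t ht
      have hjm : j ≤ m := Nat.le_of_succ_le hj
      set i := m - (j + 1) with hi
      have him : i < m := by omega
      have hmj : m - j = i + 1 := by omega
      have h1 : 1 ≤ i + 1 := Nat.le_add_left 1 i
      have h2 : i + 1 ≤ m := by omega
      obtain ⟨_, hmono, h0⟩ := hα (i + 1) h1 h2
      refine barrier_step t₀ (ψ i) (hdiff i him) (α (i + 1)) hmono h0 (hinit i him) ?_ t ht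
      intro u hu
      have := hψ (i + 1) h1 h2 u hu
      simp only [Nat.add_sub_cancel] at this
      have h3 : 0 ≤ ψ (m - j) u := ih hjm u hu
      rw [hmj] at h3
      linarith [h3, this.ge]
  have hmain : ∀ i, i < m → ∀ t, t₀ ≤ t → 0 ≤ ψ i t := by
    intro i hi t ht
    have := key (m - i) (Nat.sub_le m i) t ht
    rwa [Nat.sub_sub_self hi.le] at this
  refine ⟨hmain, fun t ht => ?_⟩
  have := hmain 0 (by omega) t ht
  rwa [hψ0] at this
end

section
/- Let t₀ ∈ ℝ, let w : ℝ → ℝ be differentiable on [t₀, ∞), and let α : ℝ → ℝ be continuous, strictly increasing, with α(0) = 0. Suppose w'(t) + α(w(t)) ≥ 0 for all t ≥ t₀, w(t₀) < 0, and w(t) < 0 for all t ≥ t₀. Then w is nondecreasing on [t₀, ∞) and w(t) → 0 as t → ∞. -/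
/-!
Because `w < 0` and `α` is increasing with `α 0 = 0`, the inequality gives `w' ≥ -α w > 0`, so `w`
increases. If `w` stayed below some `a < 0`, then `w' ≥ -α a > 0` throughout, so `w` would grow at
least linearly and eventually become positive.
-/

open Set Filter

section DerivWithinIci

variable {f : ℝ → ℝ} {a : ℝ}

theorem strictMonoOn_Ici_of_derivWithin_pos (hf : DifferentiableOn ℝ f (Ici a))
    (hf' : ∀ x, a < x → 0 < derivWithin f (Ici a) x) : StrictMonoOn f (Ici a) := by
  refine strictMonoOn_of_hasDerivWithinAt_pos (convex_Ici a) hf.continuousOn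
    (fun x hx ↦ ?_) (fun x hx ↦ hf' x (by rwa [interior_Ici] at hx))
  rw [interior_Ici] at hx ⊢
  exact (hf x (mem_Ici.2 hx.out.le)).hasDerivWithinAt.mono Ioi_subset_Ici_self

theorem tendsto_atTop_of_le_derivWithin_Ici (hf : DifferentiableOn ℝ f (Ici a)) {c : ℝ}
    (hc : 0 < c) (hf' : ∀ x, a < x → c ≤ derivWithin f (Ici a) x) :
    Tendsto f atTop atTop := by
  have hderiv : ∀ x ∈ interior (Ici a), c ≤ deriv f x := by
    rw [interior_Ici]
    intro x hx
    rw [← derivWithin_of_mem_nhds (Ici_mem_nhds hx)]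
    exact hf' x hx
  have hdiff : DifferentiableOn ℝ f (interior (Ici a)) := hf.mono interior_subset
  have hlinear : ∀ᶠ t in atTop, f a + c * (t - a) ≤ f t := by
    filter_upwards [eventually_ge_atTop a] with t ht
    linarith [(convex_Ici a).mul_sub_le_image_sub_of_le_deriv hf.continuousOn hdiff hderiv
      a self_mem_Ici t ht ht]
  refine tendsto_atTop_mono' atTop hlinear (tendsto_atTop_add_const_left _ _ ?_)
  exact (tendsto_atTop_add_const_right _ _ tendsto_id).const_mul_atTop hc

end DerivWithinIci

theorem violation_monotone_convergence_general
    (t₀ : ℝ) (w : ℝ → ℝ) (hw : DifferentiableOn ℝ w (Set.Ici t₀))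
    (α : ℝ → ℝ) (hα_mono : StrictMono α) (hα0 : α 0 = 0)
    (hineq : ∀ t, t₀ ≤ t → 0 ≤ derivWithin w (Set.Ici t₀) t + α (w t))
    (hneg : ∀ t, t₀ ≤ t → w t < 0) :
    MonotoneOn w (Set.Ici t₀) ∧ Filter.Tendsto w Filter.atTop (nhds 0) := by
  have hα_neg : ∀ a < 0, α a < 0 := fun a ha ↦ hα0 ▸ hα_mono ha
  have hrate : ∀ t, t₀ ≤ t → ∀ a, w t ≤ a → -α a ≤ derivWithin w (Ici t₀) t :=
    fun t ht a ha ↦ by linarith [hineq t ht, hα_mono.monotone ha]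
  have hmono : StrictMonoOn w (Ici t₀) := strictMonoOn_Ici_of_derivWithin_pos hw fun t ht ↦ by
    linarith [hrate t ht.le (w t) le_rfl, hα_neg _ (hneg t ht.le)]
  refine ⟨hmono.monotoneOn, tendsto_order.2 ⟨fun a ha ↦ ?_, fun b hb ↦ ?_⟩⟩
  · obtain ⟨t₁, ht₁, hat₁⟩ : ∃ t₁, t₀ ≤ t₁ ∧ a < w t₁ := by
      by_contra! hle
      have hgrow := tendsto_atTop_of_le_derivWithin_Ici hw (neg_pos.2 (hα_neg a ha))
        fun t ht ↦ hrate t ht.le a (hle t ht.le)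
      obtain ⟨t, hpos, ht⟩ := ((hgrow.eventually_gt_atTop 0).and (eventually_ge_atTop t₀)).exists
      exact (hneg t ht).not_gt hpos
    filter_upwards [eventually_ge_atTop t₁] with t ht
    exact hat₁.trans_le (hmono.monotoneOn ht₁ (ht₁.trans ht) ht)
  · filter_upwards [eventually_ge_atTop t₀] with t ht
    exact (hneg t ht).trans hb

/-- Lyapunov property when the specification is initially violated: if
`w' t + α (w t) ≥ 0` on `[t₀, ∞)` with `α` continuous, strictly increasing and
`α 0 = 0`, while `w t₀ < 0` and `w t < 0` for all `t ≥ t₀`, then `w` is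
nondecreasing on `[t₀, ∞)` and `w t → 0` as `t → ∞`. -/
theorem violation_monotone_convergence
    (t₀ : ℝ) (w : ℝ → ℝ) (hw : DifferentiableOn ℝ w (Set.Ici t₀))
    (α : ℝ → ℝ) (hα_cont : Continuous α) (hα_mono : StrictMono α) (hα0 : α 0 = 0)
    (hineq : ∀ t, t₀ ≤ t → 0 ≤ derivWithin w (Set.Ici t₀) t + α (w t))
    (h0 : w t₀ < 0) (hneg : ∀ t, t₀ ≤ t → w t < 0) :
    MonotoneOn w (Set.Ici t₀) ∧ Filter.Tendsto w Filter.atTop (nhds 0) :=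
  violation_monotone_convergence_general t₀ w hw α hα_mono hα0 hineq hneg
end
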